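/- arXiv:1911.11252 — 9 statements merged into one kernel-verified Lean document; each statement's English description precedes it below -/
import Mathlib

section
/- Let G be a finite group acting faithfully and transitively on a finite set X with |X| = n, and suppose G contains a regular subgroup N (N acts transitively on X and only the identity of N fixes a point). Then every intersecting set S ⊆ G satisfies |S| ≤ |G|/n, and a point stabilizer G_x attains this bound; hence the maximum size of an intersecting set in G is exactly |G|/n. -/
/-!
Since `N` acts regularly, two elements of an intersecting set that lie in the same left coset
of `N` differ by an element of `N` with a fixed point, hence coincide. So an intersecting set
meets each of the `|G| / |N|` cosets at most once, and `|N| ≥ n` because `N` is transitive.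
The stabilizer of a point is intersecting and, by orbit–stabilizer, has exactly `|G| / n`
elements.
-/

namespace MulAction

variable {G X : Type*}

def IsIntersecting (X : Type*) [SMul G X] (S : Set G) : Prop :=
  ∀ g ∈ S, ∀ h ∈ S, ∃ x : X, g • x = h • x

variable [Group G] [MulAction G X]

theorem isIntersecting_stabilizer (x : X) : IsIntersecting X (stabilizer G x : Set G) :=
  fun _ hg _ hh => ⟨x, (mem_stabilizer_iff.mp hg).trans (mem_stabilizer_iff.mp hh).symm⟩

theorem card_le_card_of_isPretransitive (M : Type*) [Group M] [MulAction M X]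
    [IsPretransitive M X] [Finite M] : Nat.card X ≤ Nat.card M := by
  rcases isEmpty_or_nonempty X with hX | ⟨⟨x⟩⟩
  · simp
  · exact Nat.card_le_card_of_surjective (· • x) (exists_smul_eq M x)

theorem card_stabilizer_mul_card [IsPretransitive G X] (x : X) :
    Nat.card (stabilizer G x) * Nat.card X = Nat.card G := by
  rw [← index_stabilizer_of_transitive G x]
  exact (stabilizer G x).card_mul_index

namespace IsIntersecting

variable {N : Subgroup G} {S : Set G}

theorem injOn_quotientMk (hfree : ∀ g ∈ N, ∀ x : X, g • x = x → g = 1)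
    (hS : IsIntersecting X S) : S.InjOn (QuotientGroup.mk : G → G ⧸ N) := by
  intro g hg h hh hgh
  obtain ⟨x, hx⟩ := hS g hg h hh
  have hfix : (g⁻¹ * h) • x = x := by rw [mul_smul, ← hx, inv_smul_smul]
  exact inv_mul_eq_one.mp (hfree _ (QuotientGroup.eq.mp hgh) x hfix)

theorem ncard_le_index [N.FiniteIndex] (hfree : ∀ g ∈ N, ∀ x : X, g • x = x → g = 1)
    (hS : IsIntersecting X S) : S.ncard ≤ N.index := by
  rw [← (hS.injOn_quotientMk hfree).ncard_image]
  exact Set.ncard_le_card _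

theorem ncard_mul_card_le [Finite G] [IsPretransitive N X]
    (hfree : ∀ g ∈ N, ∀ x : X, g • x = x → g = 1) (hS : IsIntersecting X S) :
    S.ncard * Nat.card X ≤ Nat.card G :=
  calc S.ncard * Nat.card X ≤ N.index * Nat.card N :=
        Nat.mul_le_mul (hS.ncard_le_index hfree) (card_le_card_of_isPretransitive N)
    _ = Nat.card G := N.index_mul_card

end IsIntersecting

end MulAction

open scoped Classical

open MulAction in
theorem stmt3_general {G X : Type*} [Group G] [Fintype G] [Fintype X]
    [MulAction G X]
    (N : Subgroup G)
    (htrans : ∀ a b : X, ∃ g ∈ N, g • a = b)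
    (hfree : ∀ g ∈ N, ∀ a : X, g • a = a → g = 1) :
    (∀ S : Finset G, (∀ g ∈ S, ∀ h ∈ S, ∃ i : X, g • i = h • i) →
        S.card * Fintype.card X ≤ Fintype.card G) ∧
      ∀ x : X,
        (∀ g ∈ Finset.univ.filter fun g : G => g • x = x,
          ∀ h ∈ Finset.univ.filter fun g : G => g • x = x,
            ∃ i : X, g • i = h • i) ∧
        (Finset.univ.filter fun g : G => g • x = x).card * Fintype.card X =
          Fintype.card G := by
  have : IsPretransitive N X :=
    ⟨fun a b => let ⟨g, hg, hgab⟩ := htrans a b; ⟨⟨g, hg⟩, hgab⟩⟩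
  have : IsPretransitive G X := .of_isScalarTower N
  have hstab (x : X) :
      ((Finset.univ.filter fun g : G => g • x = x : Finset G) : Set G) = stabilizer G x := by
    ext; simp
  refine ⟨fun S hS => ?_, fun x => ⟨?_, ?_⟩⟩
  · simpa [Nat.card_eq_fintype_card] using
      (show IsIntersecting X (S : Set G) from hS).ncard_mul_card_le hfree
  · have : IsIntersecting X (_ : Set G) := hstab x ▸ isIntersecting_stabilizer x
    exact this
  · rw [← Set.ncard_coe_finset, hstab, ← Nat.card_coe_set_eq, ← Nat.card_eq_fintype_card,
      ← Nat.card_eq_fintype_card]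
    exact card_stabilizer_mul_card x

/-- If a transitive group `G` contains a regular subgroup, then every
intersecting set has size at most `|G|/n`, and a point stabilizer attains this
bound. -/
theorem stmt3 {G X : Type*} [Group G] [Fintype G] [Fintype X]
    [MulAction G X] [FaithfulSMul G X] [MulAction.IsPretransitive G X]
    (N : Subgroup G)
    (htrans : ∀ a b : X, ∃ g ∈ N, g • a = b)
    (hfree : ∀ g ∈ N, ∀ a : X, g • a = a → g = 1) :
    (∀ S : Finset G, (∀ g ∈ S, ∀ h ∈ S, ∃ i : X, g • i = h • i) →
        S.card * Fintype.card X ≤ Fintype.card G) ∧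
      ∀ x : X,
        (∀ g ∈ Finset.univ.filter fun g : G => g • x = x,
          ∀ h ∈ Finset.univ.filter fun g : G => g • x = x,
            ∃ i : X, g • i = h • i) ∧
        (Finset.univ.filter fun g : G => g • x = x).card * Fintype.card X =
          Fintype.card G :=
  stmt3_general N htrans hfree
end

section
/- Let G be a finite group acting faithfully and transitively on a finite set X with |X| = n, let N be a regular subgroup of G, and let S ⊆ G be an intersecting set with |S| = |G|/n. Then S is a transversal of N in G: every left coset gN of N satisfies |S ∩ gN| = 1. -/
open scoped Classical

/-!
An intersecting set `S` contains no two elements `g, h` with `g⁻¹ * h ∈ N`, since `g⁻¹ * h`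
fixes a point and `N` acts semiregularly; so `S` injects into `G ⧸ N`. A regular subgroup has
`|N| = n`, hence `|G ⧸ N| = |G| / n = |S|`, and the injection is a bijection.
-/

lemma Finset.card_filter_eq_one_of_injOn_of_card_eq {α β : Type*} [Fintype β] {f : α → β}
    {S : Finset α} (hf : Set.InjOn f S) (hcard : S.card = Fintype.card β) (b : β) :
    (S.filter fun a => f a = b).card = 1 := by
  have himage : S.image f = Finset.univ :=
    Finset.eq_univ_of_card _ (by rw [Finset.card_image_of_injOn hf, hcard])
  obtain ⟨s, hs, rfl⟩ := Finset.mem_image.mp (himage ▸ Finset.mem_univ b)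
  refine le_antisymm (Finset.card_le_one.mpr fun x hx y hy => ?_)
    (Finset.card_pos.mpr ⟨s, Finset.mem_filter.mpr ⟨hs, rfl⟩⟩)
  rw [Finset.mem_filter] at hx hy
  exact hf hx.1 hy.1 (hx.2.trans hy.2.symm)

section RegularSubgroup

variable {G X : Type*} [Group G] [MulAction G X] (N : Subgroup G)

lemma Subgroup.card_eq_card_of_regular [Nonempty X]
    (htrans : ∀ a b : X, ∃ g ∈ N, g • a = b)
    (hfree : ∀ g ∈ N, ∀ a : X, g • a = a → g = 1) :
    Nat.card N = Nat.card X := by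
  obtain ⟨x₀⟩ := ‹Nonempty X›
  refine Nat.card_eq_of_bijective (fun g : N => (g : G) • x₀) ⟨?_, fun x => ?_⟩
  · rintro ⟨a, ha⟩ ⟨b, hb⟩ hab
    have hfix : (b⁻¹ * a) • x₀ = x₀ := by
      rw [mul_smul, inv_smul_eq_iff]
      exact hab
    exact Subtype.ext (inv_mul_eq_one.mp (hfree _ (N.mul_mem (N.inv_mem hb) ha) x₀ hfix)).symm
  · obtain ⟨g, hg, rfl⟩ := htrans x₀ x
    exact ⟨⟨g, hg⟩, rfl⟩

lemma Subgroup.injOn_mk_of_intersecting (hfree : ∀ g ∈ N, ∀ a : X, g • a = a → g = 1)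
    {S : Set G} (hS : ∀ g ∈ S, ∀ h ∈ S, ∃ i : X, g • i = h • i) :
    S.InjOn (QuotientGroup.mk : G → G ⧸ N) := by
  intro a ha b hb hab
  obtain ⟨i, hi⟩ := hS a ha b hb
  have hfix : (a⁻¹ * b) • i = i := by
    rw [mul_smul, inv_smul_eq_iff]
    exact hi.symm
  exact inv_mul_eq_one.mp (hfree _ (QuotientGroup.eq.mp hab) i hfix)

end RegularSubgroup

theorem stmt4_general {G X : Type*} [Group G] [Fintype G] [Fintype X]
    [MulAction G X]
    (N : Subgroup G)
    (htrans : ∀ a b : X, ∃ g ∈ N, g • a = b)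
    (hfree : ∀ g ∈ N, ∀ a : X, g • a = a → g = 1)
    (S : Finset G)
    (hS : ∀ g ∈ S, ∀ h ∈ S, ∃ i : X, g • i = h • i)
    (hcard : S.card * Fintype.card X = Fintype.card G) :
    ∀ g : G, (S.filter fun s => g⁻¹ * s ∈ N).card = 1 := by
  intro g
  have hXpos : 0 < Fintype.card X := Nat.pos_of_mul_pos_left (hcard ▸ Fintype.card_pos)
  have : Nonempty X := Fintype.card_pos_iff.mp hXpos
  have hNX := N.card_eq_card_of_regular htrans hfree
  have hScard : S.card = Fintype.card (G ⧸ N) := by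
    have hLagrange := N.card_eq_card_quotient_mul_card_subgroup
    simp only [hNX, Nat.card_eq_fintype_card] at hLagrange
    exact Nat.eq_of_mul_eq_mul_right hXpos (hcard.trans hLagrange)
  simpa only [eq_comm, QuotientGroup.eq] using
    Finset.card_filter_eq_one_of_injOn_of_card_eq (N.injOn_mk_of_intersecting hfree hS) hScard g

/-- A maximum intersecting set in a transitive group with a regular subgroup
`N` is a transversal of `N`: it meets every left coset of `N` in exactly one
element. -/
theorem stmt4 {G X : Type*} [Group G] [Fintype G] [Fintype X]
    [MulAction G X] [FaithfulSMul G X] [MulAction.IsPretransitive G X]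
    (N : Subgroup G)
    (htrans : ∀ a b : X, ∃ g ∈ N, g • a = b)
    (hfree : ∀ g ∈ N, ∀ a : X, g • a = a → g = 1)
    (S : Finset G)
    (hS : ∀ g ∈ S, ∀ h ∈ S, ∃ i : X, g • i = h • i)
    (hcard : S.card * Fintype.card X = Fintype.card G) :
    ∀ g : G, (S.filter fun s => g⁻¹ * s ∈ N).card = 1 :=
  stmt4_general N htrans hfree S hS hcard
end

section
/- Let G be a finite group acting faithfully and 2-transitively on a finite set X, let N be a regular normal subgroup of G, fix x ∈ X, and let G_x be the stabilizer of x. Let g = uh with u ∈ N and h ∈ G_x. If g is G-conjugate to an element of G_x, then: (a) there exists m ∈ N with m⁻¹ g m = h; and (b) h is the unique element of G_x that is an N-conjugate of g (i.e., if m' ∈ N and m'⁻¹ g m' ∈ G_x, then m'⁻¹ g m' = h). -/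
/-!
For `m ∈ N` normality gives `m⁻¹ (u h) m = v h` with `v = m⁻¹ u (h m h⁻¹) ∈ N`; if this lies in
`G_x` then so does `v`, and regularity forces `v = 1`. An `N`-conjugate of `g` in `G_x` exists
because `G = N G_x`: if `a⁻¹ g a ∈ G_x` and `n ∈ N` has `n x = a x`, then `n⁻¹ a ∈ G_x`, and
conjugating `a⁻¹ g a` by it gives `n⁻¹ g n`.
-/

section RegularNormalSubgroup

variable {G X : Type*} [Group G] [MulAction G X] {N : Subgroup G} {x : X}

theorem exists_mem_conj_smul_eq_of_conj_smul_eq (htrans : ∀ b : X, ∃ n ∈ N, n • x = b)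
    {g a : G} (ha : (a⁻¹ * g * a) • x = x) : ∃ n ∈ N, (n⁻¹ * g * n) • x = x := by
  obtain ⟨n, hn, hnx⟩ := htrans (a • x)
  have hk : (n⁻¹ * a) • x = x := by rw [mul_smul, ← hnx, inv_smul_smul]
  have hk' : (n⁻¹ * a)⁻¹ • x = x := by rw [inv_smul_eq_iff, hk]
  refine ⟨n, hn, ?_⟩
  calc (n⁻¹ * g * n) • x = (n⁻¹ * a) • (a⁻¹ * g * a) • (n⁻¹ * a)⁻¹ • x := by
        simp only [← mul_smul]; group
    _ = x := by rw [hk', ha, hk]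

theorem conj_mul_eq_of_conj_mul_smul_eq [N.Normal] (hfree : ∀ v ∈ N, v • x = x → v = 1)
    {u h m : G} (hu : u ∈ N) (hh : h • x = x) (hm : m ∈ N)
    (hfix : (m⁻¹ * (u * h) * m) • x = x) : m⁻¹ * (u * h) * m = h := by
  have hdecomp : m⁻¹ * (u * h) * m = (m⁻¹ * u * (h * m * h⁻¹)) * h := by group
  have hvN : m⁻¹ * u * (h * m * h⁻¹) ∈ N :=
    N.mul_mem (N.mul_mem (N.inv_mem hm) hu) (Subgroup.Normal.conj_mem ‹_› m hm h)
  have hvx : (m⁻¹ * u * (h * m * h⁻¹)) • x = x := by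
    rwa [hdecomp, mul_smul, hh] at hfix
  rw [hdecomp, hfree _ hvN hvx, one_mul]

end RegularNormalSubgroup

theorem stmt5_general {G X : Type*} [Group G]
    [MulAction G X]
    (N : Subgroup G) [N.Normal]
    (htrans : ∀ a b : X, ∃ g ∈ N, g • a = b)
    (hfree : ∀ g ∈ N, ∀ a : X, g • a = a → g = 1)
    (x : X) (u h : G) (hu : u ∈ N) (hh : h • x = x)
    (g : G) (hg : g = u * h)
    (hconj : ∃ a : G, (a⁻¹ * g * a) • x = x) :
    (∃ m ∈ N, m⁻¹ * g * m = h) ∧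
      ∀ m' ∈ N, (m'⁻¹ * g * m') • x = x → m'⁻¹ * g * m' = h := by
  subst hg
  have hunique : ∀ m ∈ N, (m⁻¹ * (u * h) * m) • x = x → m⁻¹ * (u * h) * m = h :=
    fun m hm => conj_mul_eq_of_conj_mul_smul_eq (fun v hv => hfree v hv x) hu hh hm
  obtain ⟨a, ha⟩ := hconj
  obtain ⟨n, hn, hnx⟩ := exists_mem_conj_smul_eq_of_conj_smul_eq (htrans x) ha
  exact ⟨⟨n, hn, hunique n hn hnx⟩, hunique⟩

/-- Let `G` be 2-transitive with regular normal subgroup `N`, and `g = u h`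
with `u ∈ N`, `h ∈ G_x`. If `g` is `G`-conjugate to an element of `G_x`, then
`g` can be conjugated to `h` by an element of `N`, and `h` is the unique
`N`-conjugate of `g` lying in `G_x`. -/
theorem stmt5 {G X : Type*} [Group G] [Fintype G] [Fintype X]
    [MulAction G X] [FaithfulSMul G X]
    (h2t : ∀ a b c d : X, a ≠ b → c ≠ d → ∃ g : G, g • a = c ∧ g • b = d)
    (N : Subgroup G) [N.Normal]
    (htrans : ∀ a b : X, ∃ g ∈ N, g • a = b)
    (hfree : ∀ g ∈ N, ∀ a : X, g • a = a → g = 1)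
    (x : X) (u h : G) (hu : u ∈ N) (hh : h • x = x)
    (g : G) (hg : g = u * h)
    (hconj : ∃ a : G, (a⁻¹ * g * a) • x = x) :
    (∃ m ∈ N, m⁻¹ * g * m = h) ∧
      ∀ m' ∈ N, (m'⁻¹ * g * m') • x = x → m'⁻¹ * g * m' = h :=
  stmt5_general N htrans hfree x u h hu hh g hg hconj
end

section
/- Let H and G be finite groups acting faithfully on the same finite set X, with H a proper subgroup of G, and suppose both H and G act 2-transitively on X. Then there exists a derangement in G that does not lie in H (an element of G \ H with no fixed points on X). -/
/-!
By Burnside's lemma for the actions on `X` and on `X × X`, the elements of a 2-transitive group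
fix on average one point, and the squares of their numbers of fixed points average two. As `G` and
`H` are both 2-transitive, the same two averages hold over `G \ H`. If no element of `G \ H` were
a derangement, each would fix at least one point; average one then forces each to fix exactly one
point, and the average of the squares would be one, not two.
-/

open scoped Classical

open MulAction Finset

section Burnside

variable {K Y : Type*} [Group K] [MulAction K Y]

theorem natCard_fixedBy_prod (k : K) :
    Nat.card (fixedBy (Y × Y) k) = Nat.card (fixedBy Y k) ^ 2 := by
  have : fixedBy (Y × Y) k = fixedBy Y k ×ˢ fixedBy Y k := by
    ext; simp [Prod.ext_iff]
  rw [this, Nat.card_congr (Equiv.Set.prod _ _), Nat.card_prod, sq]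

theorem card_orbitRel_quotient_prod_eq_two [Nontrivial Y] [IsMultiplyPretransitive K Y 2] :
    Nat.card (orbitRel.Quotient K (Y × Y)) = 2 := by
  have := isPretransitive_of_is_two_pretransitive (G := K) (α := Y)
  obtain ⟨a, b, hab⟩ := exists_pair_ne Y
  rw [Nat.card_eq_two_iff]
  refine ⟨⟦(a, a)⟧, ⟦(a, b)⟧, fun h => ?_, ?_⟩
  · obtain ⟨g, hg⟩ := Quotient.eq''.mp h
    have hga : g • a = a := congrArg Prod.fst hg
    have hgb : g • b = a := congrArg Prod.snd hg
    exact hab (smul_left_cancel g (hga.trans hgb.symm))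
  · refine Set.eq_univ_of_forall fun q => ?_
    induction q using Quotient.inductionOn' with
    | h p =>
      obtain ⟨x, y⟩ := p
      by_cases hxy : x = y
      · subst hxy
        obtain ⟨g, hg⟩ := exists_smul_eq K a x
        exact Or.inl (Quotient.sound' ⟨g, Prod.ext hg hg⟩)
      · obtain ⟨g, hgx, hgy⟩ :=
          is_two_pretransitive_iff.mp ‹IsMultiplyPretransitive K Y 2› hab hxy
        exact Or.inr (Quotient.sound' ⟨g, Prod.ext hgx hgy⟩)

variable [Fintype K] [Finite Y]

theorem sum_natCard_fixedBy_eq_card_orbits_mul_card :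
    ∑ k : K, Nat.card (fixedBy Y k) = Nat.card (orbitRel.Quotient K Y) * Nat.card K := by
  have := Fintype.ofFinite Y
  simpa only [Nat.card_eq_fintype_card] using sum_card_fixedBy_eq_card_orbits_mul_card_group K Y

theorem sum_natCard_fixedBy_of_isPretransitive [Nonempty Y] [IsPretransitive K Y] :
    ∑ k : K, Nat.card (fixedBy Y k) = Nat.card K := by
  obtain ⟨_⟩ := (pretransitive_iff_unique_quotient_of_nonempty K Y).mp inferInstance
  rw [sum_natCard_fixedBy_eq_card_orbits_mul_card, Nat.card_unique, one_mul]

theorem sum_natCard_fixedBy_sq_of_isMultiplyPretransitive [Nontrivial Y]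
    [IsMultiplyPretransitive K Y 2] :
    ∑ k : K, Nat.card (fixedBy Y k) ^ 2 = 2 * Nat.card K := by
  simp_rw [← natCard_fixedBy_prod]
  rw [sum_natCard_fixedBy_eq_card_orbits_mul_card, card_orbitRel_quotient_prod_eq_two]

end Burnside

theorem Subgroup.sum_filter_notMem_eq_mul_card {G : Type*} [Group G] [Fintype G]
    (H : Subgroup G) (f : G → ℕ) (c : ℕ)
    (hG : ∑ g, f g = c * Nat.card G) (hH : ∑ h : H, f h = c * Nat.card H) :
    ∑ g ∈ univ.filter (· ∉ H), f g = c * #(univ.filter (· ∉ H)) := by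
  have hsplit (u : G → ℕ) :
      ∑ h : H, u h + ∑ g ∈ univ.filter (· ∉ H), u g = ∑ g, u g := by
    rw [← sum_filter_add_sum_filter_not univ (· ∈ H)]
    congr 1
    exact (sum_subtype _ (by simp) u).symm
  have hcard := hsplit 1
  simp only [Pi.one_apply, sum_const, card_univ, smul_eq_mul, mul_one,
    Fintype.card_eq_nat_card] at hcard
  have hf := hsplit f
  rw [hG, hH, ← hcard, mul_add] at hf
  omega

theorem Finset.exists_eq_zero_of_sum_le_card_of_card_lt_sum_sq {ι : Type*} {s : Finset ι}
    {f : ι → ℕ} (h₁ : ∑ i ∈ s, f i ≤ #s) (h₂ : #s < ∑ i ∈ s, f i ^ 2) : ∃ i ∈ s, f i = 0 := by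
  by_contra! hpos
  have hone : ∀ i ∈ s, f i = 1 := by
    have hle : ∀ i ∈ s, 1 ≤ f i := fun i hi => Nat.one_le_iff_ne_zero.mpr (hpos i hi)
    have heq : ∑ i ∈ s, 1 = ∑ i ∈ s, f i := le_antisymm (sum_le_sum hle) (by simpa using h₁)
    exact fun i hi => ((sum_eq_sum_iff_of_le hle).mp heq i hi).symm
  rw [sum_congr rfl fun i hi => by rw [hone i hi, one_pow]] at h₂
  simp at h₂

theorem nontrivial_of_faithfulSMul {G X : Type*} [Group G] [MulAction G X] [FaithfulSMul G X]
    [Nontrivial G] : Nontrivial X := by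
  obtain ⟨g, hg⟩ := exists_ne (1 : G)
  obtain ⟨x, hx⟩ : ∃ x : X, g • x ≠ x := by
    by_contra! h
    exact hg (eq_of_smul_eq_smul fun x => by rw [h x, one_smul])
  exact nontrivial_of_ne _ _ hx

/-- If `H` is a proper subgroup of `G` and both act 2-transitively on `X`,
then `G` has a derangement not lying in `H`. -/
theorem stmt8 {G X : Type*} [Group G] [Fintype G] [Fintype X]
    [MulAction G X] [FaithfulSMul G X]
    (H : Subgroup G) (hH : H ≠ ⊤)
    (h2tG : ∀ a b c d : X, a ≠ b → c ≠ d → ∃ g : G, g • a = c ∧ g • b = d)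
    (h2tH : ∀ a b c d : X, a ≠ b → c ≠ d → ∃ h ∈ H, h • a = c ∧ h • b = d) :
    ∃ g : G, g ∉ H ∧ ∀ i : X, g • i ≠ i := by
  obtain ⟨g₀, hg₀⟩ := SetLike.exists_not_mem_of_ne_top H hH
  have : Nontrivial G := nontrivial_of_ne g₀ 1 fun h => hg₀ (h ▸ H.one_mem)
  have : Nontrivial X := nontrivial_of_faithfulSMul (G := G)
  have : IsMultiplyPretransitive G X 2 :=
    is_two_pretransitive_iff.mpr fun hab hcd => h2tG _ _ _ _ hab hcd
  have : IsMultiplyPretransitive H X 2 := is_two_pretransitive_iff.mpr fun hab hcd => by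
    obtain ⟨h, hh, hha, hhb⟩ := h2tH _ _ _ _ hab hcd
    exact ⟨⟨h, hh⟩, hha, hhb⟩
  have := isPretransitive_of_is_two_pretransitive (G := G) (α := X)
  have := isPretransitive_of_is_two_pretransitive (G := H) (α := X)
  have hsum := H.sum_filter_notMem_eq_mul_card (fun g => Nat.card (fixedBy X g)) 1
    (by rw [one_mul]; exact sum_natCard_fixedBy_of_isPretransitive)
    (by rw [one_mul]; exact sum_natCard_fixedBy_of_isPretransitive)
  have hsq := H.sum_filter_notMem_eq_mul_card (fun g => Nat.card (fixedBy X g) ^ 2) 2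
    sum_natCard_fixedBy_sq_of_isMultiplyPretransitive
    sum_natCard_fixedBy_sq_of_isMultiplyPretransitive
  have hpos : 0 < #(univ.filter (· ∉ H)) := card_pos.mpr ⟨g₀, by simpa using hg₀⟩
  obtain ⟨g, hg, hfix⟩ := exists_eq_zero_of_sum_le_card_of_card_lt_sum_sq (by rw [hsum, one_mul])
    (by rw [hsq]; omega)
  refine ⟨g, (mem_filter.mp hg).2, fun i hi => ?_⟩
  exact Nat.card_ne_zero.mpr ⟨⟨⟨i, hi⟩⟩, inferInstance⟩ hfix
end

section
/- Let G be a finite group acting faithfully on a finite set X, and suppose G contains a proper subgroup H that acts 2-transitively on X. Then G is generated by H ∪ Der_G, where Der_G is the set of derangements of G. In particular, if H is generated by its derangements Der_H, then G is generated by Der_G. -/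
/-!
Fix `g ∈ G` and let `s h` be the number of fixed points of `g * h` for `h ∈ H`, i.e. the
number of `x` with `h • x = g⁻¹ • x`. Counting such pairs `(h, x)` by `x`, transitivity of `H`
gives `∑ s h = |H|`; counting `(h, x, y)` with `x ≠ y` likewise, 2-transitivity gives
`∑ s h (s h - 1) = |H|`. So `s` has mean `1` without being constantly `1`, hence vanishes
somewhere: every coset `g H` contains a derangement, and `H ∪ Der_G` generates `G`.
-/

open scoped Classical

open Finset MulAction

theorem Fintype.exists_eq_zero_of_sum_eq_card {ι : Type*} [Fintype ι] {s : ι → ℕ}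
    (hsum : ∑ i, s i = Fintype.card ι) (hne : ∃ i, s i ≠ 1) : ∃ i, s i = 0 := by
  by_contra! hpos
  obtain ⟨i, hi⟩ := hne
  have hle : ∀ j ∈ univ, 1 ≤ s j := fun j _ => Nat.one_le_iff_ne_zero.mpr (hpos j)
  exact hi ((sum_eq_sum_iff_of_le hle).mp (by simpa using hsum.symm) i (mem_univ i)).symm

theorem Function.Embedding.card_filter_forall_apply {ι α : Type*} [Fintype ι] [Fintype α]
    (p : α → Prop) :
    #{e : ι ↪ α | ∀ i, p (e i)} = (#{a | p a}).descFactorial (Fintype.card ι) := by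
  let restrict : {e : ι ↪ α // ∀ i, p (e i)} ≃ (ι ↪ {a // p a}) :=
    { toFun e := e.1.codRestrict {a | p a} e.2
      invFun e := ⟨e.trans (Function.Embedding.subtype p), fun i => (e i).2⟩
      left_inv _ := rfl
      right_inv _ := rfl }
  rw [← Fintype.card_subtype, Fintype.card_congr restrict, Fintype.card_embedding_eq,
    Fintype.card_subtype]

section Counting

variable {H α : Type*} [Group H] [Fintype H] [MulAction H α] [Fintype α]

theorem MulAction.card_filter_smul_eq_mul_card [IsPretransitive H α] (a b : α) :
    #{h : H | h • a = b} * Fintype.card α = Fintype.card H := by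
  obtain ⟨h₀, rfl⟩ := exists_smul_eq H a b
  have hcoset : #{h : H | h • a = h₀ • a} = #{h : H | h • a = a} := by
    refine card_equiv (Equiv.mulLeft h₀⁻¹) fun h => ?_
    simp [mul_smul, inv_smul_eq_iff]
  have hstab : #{h : H | h • a = a} = Nat.card (stabilizer H a) := by
    rw [Nat.card_eq_fintype_card, Fintype.card_subtype]
    simp [mem_stabilizer_iff]
  rw [hcoset, hstab, ← Nat.card_eq_fintype_card, ← index_stabilizer_of_transitive H a,
    Subgroup.card_mul_index, Nat.card_eq_fintype_card]

theorem MulAction.sum_card_filter_smul_eq_card [IsPretransitive H α] [Nonempty α]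
    (f : α → α) : ∑ h : H, #{a : α | h • a = f a} = Fintype.card H := by
  refine Nat.eq_of_mul_eq_mul_right (Fintype.card_pos (α := α)) ?_
  have hswap := sum_card_bipartiteAbove_eq_sum_card_bipartiteBelow (s := univ) (t := univ)
    (r := fun (h : H) (a : α) => h • a = f a)
  simp only [bipartiteAbove, bipartiteBelow] at hswap
  simp_rw [hswap, sum_mul, card_filter_smul_eq_mul_card, sum_const, card_univ, smul_eq_mul,
    mul_comm]

theorem MulAction.sum_descFactorial_card_filter_smul_eq_card [IsMultiplyPretransitive H α 2]
    [Nontrivial α] (f : α ↪ α) :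
    ∑ h : H, (#{a : α | h • a = f a}).descFactorial 2 = Fintype.card H := by
  obtain ⟨a, b, hab⟩ := exists_pair_ne α
  have : Nonempty (Fin 2 ↪ α) := ⟨Function.Embedding.embFinTwo hab⟩
  rw [← sum_card_filter_smul_eq_card (α := Fin 2 ↪ α) (fun e => e.trans f)]
  refine sum_congr rfl fun h _ => ?_
  have hpairs := Function.Embedding.card_filter_forall_apply (ι := Fin 2) fun a => h • a = f a
  rw [Fintype.card_fin] at hpairs
  rw [← hpairs]
  congr 1
  ext e
  simp [Function.Embedding.ext_iff, Fin.forall_fin_two]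

theorem MulAction.exists_forall_smul_ne_of_isMultiplyPretransitive
    [IsMultiplyPretransitive H α 2] [Nontrivial α] (f : α ↪ α) : ∃ h : H, ∀ a, h • a ≠ f a := by
  have : IsPretransitive H α := isPretransitive_of_is_two_pretransitive
  have hpair : ∃ h : H, #{a : α | h • a = f a} ≠ 1 := by
    obtain ⟨h, -, hh⟩ := exists_ne_zero_of_sum_ne_zero
      ((sum_descFactorial_card_filter_smul_eq_card f).trans_ne (Fintype.card_ne_zero (α := H)))
    exact ⟨h, fun h1 => hh (by rw [h1]; rfl)⟩
  obtain ⟨h, hh⟩ := Fintype.exists_eq_zero_of_sum_eq_card (sum_card_filter_smul_eq_card f) hpair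
  exact ⟨h, by simpa [filter_eq_empty_iff] using hh⟩

end Counting

theorem Subgroup.closure_union_eq_top_of_forall_exists_mul_mem {G : Type*} [Group G]
    (H : Subgroup G) {D : Set G} (hD : ∀ g, ∃ h ∈ H, g * h ∈ D) :
    closure ((H : Set G) ∪ D) = ⊤ := by
  refine eq_top_iff.mpr fun g _ => ?_
  obtain ⟨h, hH, hgh⟩ := hD g
  have hgh' : g * h ∈ closure ((H : Set G) ∪ D) := subset_closure (Or.inr hgh)
  have hh' : h ∈ closure ((H : Set G) ∪ D) := subset_closure (Or.inl hH)
  simpa using mul_mem hgh' (inv_mem hh')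

theorem Subgroup.closure_eq_top_of_closure_inter_eq {G : Type*} [Group G]
    (H : Subgroup G) {D : Set G} (htop : closure ((H : Set G) ∪ D) = ⊤)
    (hH : closure ((H : Set G) ∩ D) = H) : closure D = ⊤ := by
  have hle : H ≤ closure D := hH ▸ closure_mono Set.inter_subset_right
  rw [eq_top_iff, ← htop, closure_le]
  exact Set.union_subset hle subset_closure

theorem stmt12_general {G X : Type*} [Group G] [Fintype G] [Fintype X]
    [MulAction G X] [FaithfulSMul G X]
    (H : Subgroup G)
    (h2tH : ∀ a b c d : X, a ≠ b → c ≠ d → ∃ h ∈ H, h • a = c ∧ h • b = d) :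
    Subgroup.closure ((H : Set G) ∪ {g : G | ∀ i : X, g • i ≠ i}) = ⊤ ∧
      (Subgroup.closure ((H : Set G) ∩ {g : G | ∀ i : X, g • i ≠ i}) = H →
        Subgroup.closure {g : G | ∀ i : X, g • i ≠ i} = ⊤) := by
  rcases subsingleton_or_nontrivial X with hX | hX
  · have : Subsingleton G := ⟨fun g₁ g₂ => eq_of_smul_eq_smul fun x : X => Subsingleton.elim _ _⟩
    exact ⟨Subsingleton.elim _ _, fun _ => Subsingleton.elim _ _⟩
  have : IsMultiplyPretransitive H X 2 := is_two_pretransitive_iff.mpr fun hab hcd => by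
    obtain ⟨h, hH, hac, hbd⟩ := h2tH _ _ _ _ hab hcd
    exact ⟨⟨h, hH⟩, hac, hbd⟩
  have hcoset : ∀ g : G, ∃ h ∈ H, g * h ∈ {g : G | ∀ i : X, g • i ≠ i} := fun g => by
    obtain ⟨h, hh⟩ := exists_forall_smul_ne_of_isMultiplyPretransitive (H := H)
      (MulAction.toPerm g⁻¹ : Equiv.Perm X).toEmbedding
    refine ⟨h, h.2, fun x hx => hh x ?_⟩
    simpa [Subgroup.smul_def, mul_smul, eq_inv_smul_iff] using hx
  have htop := Subgroup.closure_union_eq_top_of_forall_exists_mul_mem H hcoset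
  exact ⟨htop, Subgroup.closure_eq_top_of_closure_inter_eq H htop⟩

/-- If `G` contains a proper 2-transitive subgroup `H`, then `G` is generated
by `H ∪ Der_G`; in particular if `H` is generated by its derangements then `G`
is generated by `Der_G`. -/
theorem stmt12 {G X : Type*} [Group G] [Fintype G] [Fintype X]
    [MulAction G X] [FaithfulSMul G X]
    (H : Subgroup G) (hH : H ≠ ⊤)
    (h2tH : ∀ a b c d : X, a ≠ b → c ≠ d → ∃ h ∈ H, h • a = c ∧ h • b = d) :
    Subgroup.closure ((H : Set G) ∪ {g : G | ∀ i : X, g • i ≠ i}) = ⊤ ∧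
      (Subgroup.closure ((H : Set G) ∩ {g : G | ∀ i : X, g • i ≠ i}) = H →
        Subgroup.closure {g : G | ∀ i : X, g • i ≠ i} = ⊤) :=
  stmt12_general H h2tH
end

section
/- Let G be a finite group acting faithfully and 2-transitively on a finite set X, with a regular normal subgroup N, and let G_x be the stabilizer of a point x ∈ X. If G_x (equivalently G/N) is a simple group and there exists a derangement of G not lying in N, then the derangements of G generate G (equivalently, the derangement graph Γ_G is connected). -/
/-!
The derangements form a conjugation-invariant set, so they generate a normal subgroup `H`.
Every non-identity element of the regular subgroup `N` is a derangement, so `N ≤ H`, and the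
given derangement outside `N` shows `H ≰ N`. Since `N` is regular, the stabilizer `G_x` is a
complement of `N`, so `G ⧸ N ≅ G_x` is simple and the nontrivial normal subgroup `H / N` is
all of `G ⧸ N`.
-/

open MulAction Subgroup

section Derangements

variable (G X : Type*) [Group G] [MulAction G X]

def derangementSet : Set G := {g | ∀ i : X, g • i ≠ i}

variable {G X}

theorem conjugatesOfSet_derangementSet_subset :
    Group.conjugatesOfSet (derangementSet G X) ⊆ derangementSet G X := by
  intro d hd i hi
  obtain ⟨a, ha, hconj⟩ := Group.mem_conjugatesOfSet_iff.mp hd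
  obtain ⟨c, rfl⟩ := isConj_iff.mp hconj
  refine ha (c⁻¹ • i) ?_
  rwa [← mul_smul, ← smul_eq_iff_eq_inv_smul, ← mul_smul, ← mul_assoc]

instance normal_closure_derangementSet : (closure (derangementSet G X)).Normal := by
  have : closure (derangementSet G X) = normalClosure (derangementSet G X) :=
    le_antisymm closure_le_normalClosure (closure_mono conjugatesOfSet_derangementSet_subset)
  rw [this]
  infer_instance

theorem le_closure_derangementSet {N : Subgroup G}
    (hfree : ∀ g ∈ N, ∀ a : X, g • a = a → g = 1) : N ≤ closure (derangementSet G X) := by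
  intro n hn
  by_cases h1 : n = 1
  · exact h1 ▸ one_mem _
  · exact subset_closure fun i hi => h1 (hfree n hn i hi)

end Derangements

theorem isSimpleGroup_quotient_of_regular {G X : Type*} [Group G] [MulAction G X]
    {N : Subgroup G} [N.Normal] (x : X) [IsSimpleGroup (stabilizer G x)]
    (htrans : ∀ a : X, ∃ g ∈ N, g • a = x) (hfree : ∀ g ∈ N, g • x = x → g = 1) :
    IsSimpleGroup (G ⧸ N) := by
  have hcompl : N.IsComplement' (stabilizer G x) := by
    refine isComplement'_stabilizer x (fun n hn => Subtype.ext (hfree n n.2 hn)) fun g => ?_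
    obtain ⟨n, hn, hnx⟩ := htrans (g • x)
    exact ⟨⟨n, hn⟩, hnx⟩
  exact hcompl.symm.QuotientMulEquiv.isSimpleGroup

theorem Subgroup.eq_top_of_le_of_not_le {G : Type*} [Group G] {N H : Subgroup G} [N.Normal]
    [H.Normal] [IsSimpleGroup (G ⧸ N)] (hNH : N ≤ H) (hHN : ¬H ≤ N) : H = ⊤ := by
  have hmap : (H.map (QuotientGroup.mk' N)).Normal :=
    Normal.map ‹_› _ (QuotientGroup.mk'_surjective N)
  rcases hmap.eq_bot_or_eq_top with hbot | htop
  · rw [map_eq_bot_iff, QuotientGroup.ker_mk'] at hbot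
    exact absurd hbot hHN
  · have hker : (QuotientGroup.mk' N).ker ≤ H := by rwa [QuotientGroup.ker_mk']
    rw [← comap_map_eq_self hker, htop, comap_top]

theorem stmt13_general {G X : Type*} [Group G]
    [MulAction G X]
    (N : Subgroup G) [N.Normal]
    (htrans : ∀ a b : X, ∃ g ∈ N, g • a = b)
    (hfree : ∀ g ∈ N, ∀ a : X, g • a = a → g = 1)
    (x : X)
    (hsimple : IsSimpleGroup (MulAction.stabilizer G x))
    (hder : ∃ g : G, g ∉ N ∧ ∀ i : X, g • i ≠ i) :
    Subgroup.closure {g : G | ∀ i : X, g • i ≠ i} = ⊤ := by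
  have : IsSimpleGroup (G ⧸ N) :=
    isSimpleGroup_quotient_of_regular x (fun a => htrans a x) fun g hg => hfree g hg x
  obtain ⟨g, hgN, hg⟩ := hder
  show closure (derangementSet G X) = ⊤
  exact eq_top_of_le_of_not_le (le_closure_derangementSet hfree)
    fun hle => hgN (hle (subset_closure hg))

/-- Let `G` be 2-transitive with a regular normal subgroup `N`. If a point
stabilizer is a simple group and there is a derangement outside `N`, then the
derangements generate `G`. -/
theorem stmt13 {G X : Type*} [Group G] [Fintype G] [Fintype X]
    [MulAction G X] [FaithfulSMul G X]
    (h2t : ∀ a b c d : X, a ≠ b → c ≠ d → ∃ g : G, g • a = c ∧ g • b = d)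
    (N : Subgroup G) [N.Normal]
    (htrans : ∀ a b : X, ∃ g ∈ N, g • a = b)
    (hfree : ∀ g ∈ N, ∀ a : X, g • a = a → g = 1)
    (x : X)
    (hsimple : IsSimpleGroup (MulAction.stabilizer G x))
    (hder : ∃ g : G, g ∉ N ∧ ∀ i : X, g • i ≠ i) :
    Subgroup.closure {g : G | ∀ i : X, g • i ≠ i} = ⊤ :=
  stmt13_general N htrans hfree x hsimple hder
end

section
/- Let G be a finite group acting faithfully and 2-transitively on a finite set X, with a regular normal subgroup N, and let H = G_x be the stabilizer of a point x ∈ X. For h ∈ H, the coset Nh contains a derangement if and only if h centralizes some nonidentity element of N (i.e., there exists u ∈ N, u ≠ 1, with hu = uh). -/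
/-!
Since `N` is regular and `h` fixes `x`, an element `u * h` with `u ∈ N` fixes the point `n • x`
(`n ∈ N`) exactly when `u = ⁅n, h⁆`. Hence `N * h` contains a derangement iff the map
`n ↦ ⁅n, h⁆` of the finite group `N` into itself is not surjective, i.e. not injective; and
`⁅n, h⁆ = ⁅m, h⁆` iff `m⁻¹ * n` commutes with `h`.
-/

open scoped commutatorElement

theorem commutatorElement_eq_commutatorElement_iff {G : Type*} [Group G] (n m g : G) :
    ⁅n, g⁆ = ⁅m, g⁆ ↔ Commute g (m⁻¹ * n) := by
  rw [commutatorElement_def, commutatorElement_def, mul_left_inj, Commute, SemiconjBy]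
  constructor <;> intro h
  · calc g * (m⁻¹ * n) = m⁻¹ * (m * g * m⁻¹) * n := by group
      _ = m⁻¹ * (n * g * n⁻¹) * n := by rw [h]
      _ = m⁻¹ * n * g := by group
  · calc n * g * n⁻¹ = m * (m⁻¹ * n * g) * n⁻¹ := by group
      _ = m * (g * (m⁻¹ * n)) * n⁻¹ := by rw [h]
      _ = m * g * m⁻¹ := by group

namespace Subgroup

variable {G : Type*} [Group G]

theorem Normal.commutatorElement_mem_left {N : Subgroup G} (hN : N.Normal) {n : G} (hn : n ∈ N)
    (g : G) : ⁅n, g⁆ ∈ N := by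
  rw [commutatorElement_def, mul_assoc, mul_assoc, ← mul_assoc g]
  exact mul_mem hn (hN.conj_mem _ (inv_mem hn) g)

def commutatorMap (N : Subgroup G) [hN : N.Normal] (g : G) (n : N) : N :=
  ⟨⁅(n : G), g⁆, hN.commutatorElement_mem_left n.2 g⟩

theorem not_injective_commutatorMap_iff (N : Subgroup G) [N.Normal] (g : G) :
    ¬ Function.Injective (N.commutatorMap g) ↔ ∃ u ∈ N, u ≠ 1 ∧ Commute g u := by
  simp only [Function.Injective, not_forall, commutatorMap, Subtype.mk.injEq,
    commutatorElement_eq_commutatorElement_iff, exists_prop]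
  constructor
  · rintro ⟨n, m, hc, hnm⟩
    refine ⟨(m : G)⁻¹ * n, mul_mem (inv_mem m.2) n.2, ?_, hc⟩
    rwa [Ne, inv_mul_eq_one, eq_comm, ← Subtype.ext_iff]
  · rintro ⟨u, hu, hu1, hc⟩
    exact ⟨⟨u, hu⟩, 1, by simpa using hc, by simpa [Subtype.ext_iff] using hu1⟩

variable {X : Type*} [MulAction G X]

theorem mul_smul_smul_eq_smul_iff (N : Subgroup G) [hN : N.Normal] {x : X}
    (hfree : ∀ n ∈ N, n • x = x → n = 1) {g : G} (hg : g • x = x)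
    {n u : G} (hn : n ∈ N) (hu : u ∈ N) :
    (u * g) • n • x = n • x ↔ u = ⁅n, g⁆ := by
  have hmem : n⁻¹ * u * (g * n * g⁻¹) ∈ N :=
    mul_mem (mul_mem (inv_mem hn) hu) (hN.conj_mem n hn g)
  have hsmul : (n⁻¹ * u * (g * n * g⁻¹)) • x = n⁻¹ • (u * g) • n • x := by
    calc (n⁻¹ * u * (g * n * g⁻¹)) • x = (n⁻¹ * (u * g) * n) • g⁻¹ • x := by
          rw [smul_smul]; group
      _ = n⁻¹ • (u * g) • n • x := by rw [inv_smul_eq_iff.2 hg.symm, mul_smul, mul_smul]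
  have hcomm : n * (g * n * g⁻¹)⁻¹ = ⁅n, g⁆ := by rw [commutatorElement_def]; group
  rw [← inv_smul_eq_iff, ← hsmul, ← hcomm, ← inv_mul_eq_iff_eq_mul, ← mul_eq_one_iff_eq_inv]
  exact ⟨hfree _ hmem, fun h => by rw [h, one_smul]⟩

theorem exists_smul_eq_self_iff_mem_range_commutatorMap (N : Subgroup G) [N.Normal] {x : X}
    (htrans : ∀ i : X, ∃ n ∈ N, n • x = i) (hfree : ∀ n ∈ N, n • x = x → n = 1)
    {g : G} (hg : g • x = x) (u : N) :
    (∃ i : X, ((u : G) * g) • i = i) ↔ u ∈ Set.range (N.commutatorMap g) := by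
  simp only [Set.mem_range, Subtype.ext_iff, commutatorMap, Subtype.exists, eq_comm (b := (u : G))]
  constructor
  · rintro ⟨i, hi⟩
    obtain ⟨n, hn, rfl⟩ := htrans i
    exact ⟨n, hn, (N.mul_smul_smul_eq_smul_iff hfree hg hn u.2).1 hi⟩
  · rintro ⟨n, hn, hu⟩
    exact ⟨n • x, (N.mul_smul_smul_eq_smul_iff hfree hg hn u.2).2 hu⟩

end Subgroup

theorem stmt14_general {G X : Type*} [Group G] [Fintype G]
    [MulAction G X]
    (N : Subgroup G) [N.Normal]
    (htrans : ∀ a b : X, ∃ g ∈ N, g • a = b)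
    (hfree : ∀ g ∈ N, ∀ a : X, g • a = a → g = 1)
    (x : X) (h : G) (hh : h • x = x) :
    (∃ u ∈ N, ∀ i : X, (u * h) • i ≠ i) ↔
      ∃ u ∈ N, u ≠ 1 ∧ h * u = u * h := by
  have hderangement : (∃ u ∈ N, ∀ i : X, (u * h) • i ≠ i) ↔
      ¬ Function.Surjective (N.commutatorMap h) := by
    simp only [Function.Surjective, not_forall, ← Set.mem_range,
      ← N.exists_smul_eq_self_iff_mem_range_commutatorMap (htrans x) (fun n hn => hfree n hn x) hh,
      not_exists, Subtype.exists, exists_prop]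
  rw [hderangement, ← Finite.injective_iff_surjective, N.not_injective_commutatorMap_iff]
  rfl

/-- Let `G` be 2-transitive with a regular normal subgroup `N` and let
`h ∈ G_x`. The coset `Nh` contains a derangement iff `h` centralizes a
nonidentity element of `N`. -/
theorem stmt14 {G X : Type*} [Group G] [Fintype G] [Fintype X]
    [MulAction G X] [FaithfulSMul G X]
    (h2t : ∀ a b c d : X, a ≠ b → c ≠ d → ∃ g : G, g • a = c ∧ g • b = d)
    (N : Subgroup G) [N.Normal]
    (htrans : ∀ a b : X, ∃ g ∈ N, g • a = b)
    (hfree : ∀ g ∈ N, ∀ a : X, g • a = a → g = 1)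
    (x : X) (h : G) (hh : h • x = x) :
    (∃ u ∈ N, ∀ i : X, (u * h) • i ≠ i) ↔
      ∃ u ∈ N, u ≠ 1 ∧ h * u = u * h :=
  stmt14_general N htrans hfree x h hh
end

section
/- Let G be a finite group acting faithfully and 2-transitively on a finite set X, with a regular normal subgroup N, and let H = G_x be the stabilizer of a point x ∈ X. Then the subgroup of G generated by the set Der_G of derangements equals the subgroup generated by N together with the two-point stabilizers G_x ∩ G_y for all y ∈ X with y ≠ x. -/
/-!
Identify `X` with the regular normal subgroup `N` through `m ↦ m • x`. For `h` fixing `x` and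
`n ∈ N`, the element `n * h` fixes `m • x` exactly when `⁅m, h⁆ = n`. Hence `n * h` is a
derangement iff `n` is not in the image of `m ↦ ⁅m, h⁆` on `N`, while `h` fixes a second point
iff this map is not injective on `N`. The map sends the finite set `N` into itself, so both
conditions say the same. Every `g ∈ G` is `n * h` with `n ∈ N`, `h ∈ G_x`, which gives one
inclusion; for the other, an `h ∈ G_x ∩ G_y` is `n⁻¹ * (n * h)`, a product of two
derangements.
-/

open scoped commutatorElement

section Commutator

variable {G : Type*} [Group G]

theorem commutatorElement_eq_commutatorElement_iff_s15 {a b h : G} :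
    ⁅a, h⁆ = ⁅b, h⁆ ↔ ⁅b⁻¹ * a, h⁆ = 1 := by
  rw [commutatorElement_eq_one_iff_mul_comm, commutatorElement_def, commutatorElement_def,
    mul_left_inj, mul_inv_eq_iff_eq_mul, mul_assoc b, mul_assoc b, ← inv_mul_eq_iff_eq_mul,
    mul_assoc, mul_assoc]

theorem injOn_commutatorElement_iff {N : Subgroup G} {h : G} :
    Set.InjOn (⁅·, h⁆) (N : Set G) ↔ ∀ m ∈ N, ⁅m, h⁆ = 1 → m = 1 := by
  refine ⟨fun hinj m hm hm1 => hinj hm N.one_mem (by simpa using hm1),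
    fun H a ha b hb hab => ?_⟩
  have := H _ (N.mul_mem (N.inv_mem hb) ha) (commutatorElement_eq_commutatorElement_iff_s15.mp hab)
  exact (inv_mul_eq_one.mp this).symm

theorem mapsTo_commutatorElement (N : Subgroup G) [N.Normal] (h : G) :
    Set.MapsTo (⁅·, h⁆) (N : Set G) N := fun _ hm =>
  Subgroup.commutator_le_left N ⊤ (Subgroup.commutator_mem_commutator hm (Subgroup.mem_top h))

end Commutator

section RegularNormalSubgroup

variable {G X : Type*} [Group G] [MulAction G X] {N : Subgroup G} [N.Normal]
  (hfree : ∀ g ∈ N, ∀ a : X, g • a = a → g = 1) {x : X} {h : G}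

include hfree in
theorem mul_smul_smul_eq_iff_commutatorElement_eq (hx : h • x = x) {m n : G} (hm : m ∈ N)
    (hn : n ∈ N) :
    (n * h) • m • x = m • x ↔ ⁅m, h⁆ = n := by
  have hmem : m⁻¹ * (n * (h * m * h⁻¹)) ∈ N :=
    N.mul_mem (N.inv_mem hm) (N.mul_mem hn (Subgroup.Normal.conj_mem ‹_› m hm h))
  have hx' : h⁻¹ • x = x := inv_smul_eq_iff.mpr hx.symm
  calc (n * h) • m • x = m • x ↔ (m⁻¹ * (n * (h * m * h⁻¹))) • x = x := by
        rw [mul_smul, mul_smul, mul_smul, mul_smul, hx', inv_smul_eq_iff, mul_smul]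
    _ ↔ m⁻¹ * (n * (h * m * h⁻¹)) = 1 := ⟨hfree _ hmem x, fun e => by rw [e, one_smul]⟩
    _ ↔ ⁅m, h⁆ = n := by
        rw [commutatorElement_def, inv_mul_eq_one, eq_comm, ← eq_mul_inv_iff_mul_eq, eq_comm]
        simp only [mul_inv_rev, inv_inv, mul_assoc]

include hfree in
theorem smul_smul_eq_iff_commutatorElement_eq_one (hx : h • x = x) {m : G} (hm : m ∈ N) :
    h • m • x = m • x ↔ ⁅m, h⁆ = 1 := by
  simpa using mul_smul_smul_eq_iff_commutatorElement_eq hfree hx hm N.one_mem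

variable (htrans : ∀ a b : X, ∃ g ∈ N, g • a = b)

include hfree htrans in
theorem exists_ne_smul_eq_self_iff_not_injOn (hx : h • x = x) :
    (∃ y, y ≠ x ∧ h • y = y) ↔ ¬ Set.InjOn (⁅·, h⁆) (N : Set G) := by
  rw [injOn_commutatorElement_iff]
  push Not
  constructor
  · rintro ⟨y, hy, hhy⟩
    obtain ⟨m, hm, rfl⟩ := htrans x y
    refine ⟨m, hm, (smul_smul_eq_iff_commutatorElement_eq_one hfree hx hm).mp hhy, ?_⟩
    rintro rfl
    exact hy (one_smul G x)
  · rintro ⟨m, hm, hcomm, hm1⟩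
    exact ⟨m • x, fun hmx => hm1 (hfree m hm x hmx),
      (smul_smul_eq_iff_commutatorElement_eq_one hfree hx hm).mpr hcomm⟩

include hfree htrans in
theorem forall_mul_smul_ne_iff_notMem_image (hx : h • x = x) {n : G} (hn : n ∈ N) :
    (∀ i : X, (n * h) • i ≠ i) ↔ n ∉ (⁅·, h⁆) '' (N : Set G) := by
  constructor
  · rintro hder ⟨m, hm, e⟩
    exact hder _ ((mul_smul_smul_eq_iff_commutatorElement_eq hfree hx hm hn).mpr e)
  · rintro hn' i hi
    obtain ⟨m, hm, rfl⟩ := htrans x i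
    exact hn' ⟨m, hm, (mul_smul_smul_eq_iff_commutatorElement_eq hfree hx hm hn).mp hi⟩

include hfree htrans in
theorem exists_ne_smul_eq_self_iff_exists_derangement [Finite G] (hx : h • x = x) :
    (∃ y, y ≠ x ∧ h • y = y) ↔ ∃ n ∈ N, ∀ i : X, (n * h) • i ≠ i := by
  have hfin := Set.toFinite (N : Set G)
  have hmaps := mapsTo_commutatorElement N h
  rw [exists_ne_smul_eq_self_iff_not_injOn hfree htrans hx, hfin.injOn_iff_bijOn_of_mapsTo hmaps,
    ← hfin.surjOn_iff_bijOn_of_mapsTo hmaps, Set.SurjOn, Set.not_subset]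
  exact exists_congr fun n => and_congr_right fun hn =>
    (forall_mul_smul_ne_iff_notMem_image hfree htrans hx hn).symm

end RegularNormalSubgroup

theorem stmt15_general {G X : Type*} [Group G] [Fintype G]
    [MulAction G X]
    (N : Subgroup G) [N.Normal]
    (htrans : ∀ a b : X, ∃ g ∈ N, g • a = b)
    (hfree : ∀ g ∈ N, ∀ a : X, g • a = a → g = 1)
    (x : X) :
    Subgroup.closure {g : G | ∀ i : X, g • i ≠ i} =
      Subgroup.closure
        ((N : Set G) ∪ {g : G | g • x = x ∧ ∃ y : X, y ≠ x ∧ g • y = y}) := by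
  have derangement_of_mem {n : G} (hn : n ∈ N) (hn1 : n ≠ 1) : ∀ i : X, n • i ≠ i :=
    fun i hi => hn1 (hfree n hn i hi)
  apply le_antisymm <;> rw [Subgroup.closure_le]
  · intro g hg
    obtain ⟨n, hn, hnx⟩ := htrans x (g • x)
    have hx : (n⁻¹ * g) • x = x := by rw [mul_smul, ← hnx, inv_smul_smul]
    have hfix := (exists_ne_smul_eq_self_iff_exists_derangement hfree htrans hx).mpr
      ⟨n, hn, by rwa [mul_inv_cancel_left]⟩
    rw [← mul_inv_cancel_left n g]
    exact mul_mem (Subgroup.subset_closure (Or.inl hn))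
      (Subgroup.subset_closure (Or.inr ⟨hx, hfix⟩))
  · rintro g (hg | ⟨hx, hfix⟩)
    · obtain rfl | hg1 := eq_or_ne g 1
      · exact one_mem _
      · exact Subgroup.subset_closure (derangement_of_mem hg hg1)
    · obtain ⟨n, hn, hder⟩ :=
        (exists_ne_smul_eq_self_iff_exists_derangement hfree htrans hx).mp hfix
      have hn1 : n⁻¹ ≠ 1 := by
        rintro hn1
        exact hder x (by rw [inv_eq_one.mp hn1, one_mul, hx])
      rw [← inv_mul_cancel_left n g]
      exact mul_mem (Subgroup.subset_closure (derangement_of_mem (inv_mem hn) hn1))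
        (Subgroup.subset_closure hder)

/-- Let `G` be 2-transitive with a regular normal subgroup `N` and point
stabilizer `G_x`. The subgroup generated by the derangements of `G` equals the
subgroup generated by `N` together with the two-point stabilizers
`G_x ∩ G_y`, `y ≠ x`. -/
theorem stmt15 {G X : Type*} [Group G] [Fintype G] [Fintype X]
    [MulAction G X] [FaithfulSMul G X]
    (h2t : ∀ a b c d : X, a ≠ b → c ≠ d → ∃ g : G, g • a = c ∧ g • b = d)
    (N : Subgroup G) [N.Normal]
    (htrans : ∀ a b : X, ∃ g ∈ N, g • a = b)
    (hfree : ∀ g ∈ N, ∀ a : X, g • a = a → g = 1)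
    (x : X) :
    Subgroup.closure {g : G | ∀ i : X, g • i ≠ i} =
      Subgroup.closure
        ((N : Set G) ∪ {g : G | g • x = x ∧ ∃ y : X, y ≠ x ∧ g • y = y}) :=
  stmt15_general N htrans hfree x
end

section
/- Let G be a finite group acting faithfully and 2-transitively on a finite set X, with a regular normal subgroup N. Then G is a Frobenius group (every nonidentity element fixes at most one point of X) if and only if the derangement graph Γ_G is a disjoint union of complete graphs, i.e., for all g, h, k ∈ G, if g is adjacent to h and h is adjacent to k and g ≠ k, then g is adjacent to k in Γ_G. -/
/-!
Let `N` be the regular normal subgroup. In a Frobenius group every derangement `a` lies in `N`: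
if `n ∈ N` agrees with `a` at `x`, then `s = n⁻¹ a` fixes `x`, and for `s ≠ 1` the map
`u ↦ ⁅u, s⁆` is injective, hence a permutation of `N`; so `a = n s = u s u⁻¹` for some `u ∈ N`,
which fixes `u • x`. As `g` and `h` do not intersect iff `h⁻¹ g` is a derangement, non-intersection
becomes "distinct and in the same coset of `N`", which is transitive.

Conversely, if `g ≠ 1` fixes `i ≠ j`, some `n ∈ N` agrees with `g` nowhere: otherwise choosing a
point of agreement for each `n` injects `N` into `X`, bijectively since `|N| = |X|`, while only
`n = 1` agrees with `g` at a fixed point of `g`. Then `g`, `n`, `1` violate transitivity.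
-/

open scoped Classical

open scoped commutatorElement

namespace Subgroup

variable {G X : Type*} [Group G] [MulAction G X] {N : Subgroup G}

theorem eq_of_smul_eq_of_mem (hfree : ∀ g ∈ N, ∀ a : X, g • a = a → g = 1)
    {m n : G} (hm : m ∈ N) (hn : n ∈ N) {x : X} (h : m • x = n • x) : m = n :=
  (inv_mul_eq_one.mp <|
    hfree _ (N.mul_mem (N.inv_mem hn) hm) x (by rw [mul_smul, h, inv_smul_smul])).symm

theorem bijective_smul_of_regular (htrans : ∀ a b : X, ∃ g ∈ N, g • a = b)
    (hfree : ∀ g ∈ N, ∀ a : X, g • a = a → g = 1) (x : X) :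
    Function.Bijective fun n : N => (n : G) • x :=
  ⟨fun m n h => Subtype.ext (eq_of_smul_eq_of_mem hfree m.2 n.2 h), fun y =>
    let ⟨n, hn, hny⟩ := htrans x y
    ⟨⟨n, hn⟩, hny⟩⟩

theorem injOn_commutatorElement
    (hF : ∀ g : G, g ≠ 1 → ∀ i j : X, g • i = i → g • j = j → i = j)
    (hfree : ∀ g ∈ N, ∀ a : X, g • a = a → g = 1)
    {s : G} (hs : s ≠ 1) {x : X} (hsx : s • x = x) :
    Set.InjOn (fun u : G => ⁅u, s⁆) (N : Set G) := by
  intro u hu v hv huv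
  have hcomm : Commute (v⁻¹ * u) s := by
    simp only [commutatorElement_def, mul_left_inj] at huv
    have := congrArg (fun z => v⁻¹ * z * u) huv
    simpa [Commute, SemiconjBy, mul_assoc] using this
  have hfix : s • (v⁻¹ * u) • x = (v⁻¹ * u) • x := by
    rw [← mul_smul, ← hcomm.eq, mul_smul, hsx]
  have hux : u • x = v • x := by
    rw [← inv_smul_eq_iff, ← mul_smul]
    exact hF s hs _ x hfix hsx
  exact eq_of_smul_eq_of_mem hfree hu hv hux

theorem mem_of_forall_smul_ne [Finite X] [N.Normal]
    (hF : ∀ g : G, g ≠ 1 → ∀ i j : X, g • i = i → g • j = j → i = j)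
    (htrans : ∀ a b : X, ∃ g ∈ N, g • a = b)
    (hfree : ∀ g ∈ N, ∀ a : X, g • a = a → g = 1)
    (x : X) {a : G} (ha : ∀ y : X, a • y ≠ y) : a ∈ N := by
  obtain ⟨n, hn, hnx⟩ := htrans x (a • x)
  set s := n⁻¹ * a
  have hsx : s • x = x := by rw [mul_smul, ← hnx, inv_smul_smul]
  by_cases hs : s = 1
  · rwa [← inv_mul_eq_one.mp hs]
  have : Finite N := Finite.of_injective _ (bijective_smul_of_regular htrans hfree x).1
  have hmaps : Set.MapsTo (fun u : G => ⁅u, s⁆) (N : Set G) N := fun u (hu : u ∈ N) => by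
    show ⁅u, s⁆ ∈ N
    rw [commutatorElement_def, mul_assoc, mul_assoc]
    exact N.mul_mem hu (by simpa [mul_assoc] using ‹N.Normal›.conj_mem _ (N.inv_mem hu) s)
  obtain ⟨u, hu, hun⟩ := (((N : Set G).toFinite.injOn_iff_bijOn_of_mapsTo hmaps).mp
    (injOn_commutatorElement hF hfree hs hsx)).surjOn hn
  have hau : a = u * s * u⁻¹ :=
    calc a = n * s := (mul_inv_cancel_left n a).symm
      _ = u * s * u⁻¹ := by rw [← hun]; simp only [commutatorElement_def]; group
  exact (ha (u • x) (by rw [hau, mul_smul, mul_smul, inv_smul_smul, hsx])).elim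

theorem inv_mul_mem_of_forall_smul_ne [Finite X] [N.Normal]
    (hF : ∀ g : G, g ≠ 1 → ∀ i j : X, g • i = i → g • j = j → i = j)
    (htrans : ∀ a b : X, ∃ g ∈ N, g • a = b)
    (hfree : ∀ g ∈ N, ∀ a : X, g • a = a → g = 1)
    (x : X) {g h : G} (hgh : ∀ i : X, g • i ≠ h • i) : h⁻¹ * g ∈ N :=
  mem_of_forall_smul_ne hF htrans hfree x fun y hy =>
    hgh y (by rwa [mul_smul, inv_smul_eq_iff] at hy)

theorem exists_mem_forall_smul_ne [Finite X]
    (htrans : ∀ a b : X, ∃ g ∈ N, g • a = b)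
    (hfree : ∀ g ∈ N, ∀ a : X, g • a = a → g = 1)
    {g : G} {i j : X} (hij : i ≠ j) (hi : g • i = i) (hj : g • j = j) :
    ∃ n ∈ N, ∀ x : X, g • x ≠ n • x := by
  by_contra! hcover
  choose e he using fun n : N => hcover n n.2
  have he_inj : Function.Injective e := fun m n hmn =>
    Subtype.ext (eq_of_smul_eq_of_mem hfree m.2 n.2 (by rw [← he m, hmn, he n]))
  have hN := bijective_smul_of_regular htrans hfree i
  have : Finite N := Finite.of_injective _ hN.1
  have he_surj :=
    (Finite.injective_iff_surjective_of_equiv (Equiv.ofBijective _ hN)).mp he_inj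
  have he_one : ∀ {y : X}, g • y = y → e 1 = y := fun {y} hy => by
    obtain ⟨n, rfl⟩ := he_surj y
    exact congrArg e (Subtype.ext (eq_of_smul_eq_of_mem hfree n.2 N.one_mem
      (by rw [← he n, hy, N.coe_one, one_smul]))).symm
  exact hij ((he_one hi).symm.trans (he_one hj))

end Subgroup

theorem stmt17_general {G X : Type*} [Group G] [Fintype X]
    [MulAction G X]
    (N : Subgroup G) [N.Normal]
    (htrans : ∀ a b : X, ∃ g ∈ N, g • a = b)
    (hfree : ∀ g ∈ N, ∀ a : X, g • a = a → g = 1) :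
    (∀ g : G, g ≠ 1 → ∀ i j : X, g • i = i → g • j = j → i = j) ↔
      (∀ g h k : G,
        (g ≠ h ∧ ∀ i : X, g • i ≠ h • i) →
        (h ≠ k ∧ ∀ i : X, h • i ≠ k • i) →
        g ≠ k → (g ≠ k ∧ ∀ i : X, g • i ≠ k • i)) := by
  constructor
  · intro hF g h k ⟨_, hgh⟩ ⟨_, hhk⟩ hgk
    refine ⟨hgk, fun i hi => hgk ?_⟩
    have hmem : k⁻¹ * h * (h⁻¹ * g) ∈ N :=
      N.mul_mem (Subgroup.inv_mul_mem_of_forall_smul_ne hF htrans hfree i hhk)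
        (Subgroup.inv_mul_mem_of_forall_smul_ne hF htrans hfree i hgh)
    rw [mul_assoc, mul_inv_cancel_left] at hmem
    exact (inv_mul_eq_one.mp (hfree _ hmem i (by rw [mul_smul, hi, inv_smul_smul]))).symm
  · intro hC g hg i j hi hj
    by_contra hij
    obtain ⟨n, hn, hgn⟩ := Subgroup.exists_mem_forall_smul_ne htrans hfree hij hi hj
    have hn1 : n ≠ 1 := fun h => hgn i (by rw [h, one_smul, hi])
    have hnd : ∀ x : X, n • x ≠ (1 : G) • x := fun x hx =>
      hn1 (hfree n hn x (by rwa [one_smul] at hx))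
    exact (hC g n 1 ⟨fun h => hgn i (by rw [h]), hgn⟩ ⟨hn1, hnd⟩ hg).2 i (by rwa [one_smul])

/-- A 2-transitive group with a regular normal subgroup `N` is a Frobenius
group iff its derangement graph is a disjoint union of complete graphs. -/
theorem stmt17 {G X : Type*} [Group G] [Fintype G] [Fintype X]
    [MulAction G X] [FaithfulSMul G X]
    (h2t : ∀ a b c d : X, a ≠ b → c ≠ d → ∃ g : G, g • a = c ∧ g • b = d)
    (N : Subgroup G) [N.Normal]
    (htrans : ∀ a b : X, ∃ g ∈ N, g • a = b)
    (hfree : ∀ g ∈ N, ∀ a : X, g • a = a → g = 1) :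
    (∀ g : G, g ≠ 1 → ∀ i j : X, g • i = i → g • j = j → i = j) ↔
      (∀ g h k : G,
        (g ≠ h ∧ ∀ i : X, g • i ≠ h • i) →
        (h ≠ k ∧ ∀ i : X, h • i ≠ k • i) →
        g ≠ k → (g ≠ k ∧ ∀ i : X, g • i ≠ k • i)) :=
  stmt17_general N htrans hfree
end
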